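/- arXiv:math/0211197 — 2 statements merged into one kernel-verified Lean document; each statement's English description precedes it below -/
import Mathlib

section
/- Let n ≥ 2 and let B_n be the Artin braid group with standard generators σ_1, …, σ_{n−1}. Let W be a positive braid, i.e., an element of the submonoid B_n^+ of B_n generated by σ_1, …, σ_{n−1}. If W · σ_i^m = σ_j^m · W for some indices 1 ≤ i, j ≤ n−1 and some integer m ≥ 1, then W · σ_i = σ_j · W. -/
/-- The braid relations on the free group on `m` generators, as relator words:
`σᵢσⱼσᵢ⁻¹σⱼ⁻¹` for `|i - j| ≥ 2` and `σᵢσⱼσᵢ(σⱼσᵢσⱼ)⁻¹` for `j = i + 1`. -/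
def braidRels (m : ℕ) : Set (FreeGroup (Fin m)) :=
  { r | ∃ i j : Fin m,
      ((i : ℕ) + 2 ≤ (j : ℕ) ∧
        r = .of i * .of j * (.of i)⁻¹ * (.of j)⁻¹) ∨
      ((j : ℕ) = (i : ℕ) + 1 ∧
        r = .of i * .of j * .of i * (.of j * .of i * .of j)⁻¹) }

/-- The Artin braid group `B_n`, presented over `Fin (n - 1)`. -/
def BraidGroup (n : ℕ) : Type := PresentedGroup (braidRels (n - 1))

instance (n : ℕ) : Group (BraidGroup n) := by unfold BraidGroup; infer_instance

/-- The standard Artin generator `σ_{i+1}` (0-indexed by `i : Fin (n - 1)`,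
so `braidGen n ⟨0, _⟩` is `σ_1`). -/
def braidGen (n : ℕ) (i : Fin (n - 1)) : BraidGroup n := PresentedGroup.of i

/-!
Positive braid words are compared in the positive braid monoid on infinitely many strands.
Garside's key lemma, proved by induction on the length and along a chain of rewritings, says
that if `a X = b Y` as positive braids, then both equal `lcm(a, b) Z` for one positive braid `Z`,
where `lcm(a, b)` is the least common right multiple of the letters; in particular the monoid is
cancellative.
The fundamental braid `Δ` is left divisible by every letter and conjugates letters to letters,
so any two positive braids have a common right multiple, a power of `Δ`, and (reversing words)
a common left multiple. By Ore's theorem the monoid embeds in its group of fractions, through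
which `B_n` maps, so the relation `W σᵢᵐ = σⱼᵐ W` already holds between positive words.
There `W σᵢ = σⱼ W` follows by induction on the length of `W`: if `W = a W₀`, the key lemma
applied to `a (W₀ σᵢᵐ) = σⱼ (σⱼᵐ⁻¹ a W₀)` produces a shorter conjugator, according to
whether `a = j`, `|a - j| = 1` or `|a - j| ≥ 2`.
-/

namespace BraidWord

def Far (a b : ℕ) : Prop := a + 2 ≤ b ∨ b + 2 ≤ a

def Adj (a b : ℕ) : Prop := b = a + 1 ∨ a = b + 1

instance : DecidableRel Adj := fun _ _ => inferInstanceAs (Decidable (_ ∨ _))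

theorem Far.symm {a b : ℕ} (h : Far a b) : Far b a := Or.symm h

theorem Adj.symm {a b : ℕ} (h : Adj a b) : Adj b a := Or.symm h

theorem Adj.not_far {a b : ℕ} (h : Adj a b) : ¬Far a b := by
  unfold Adj Far at *; omega

theorem eq_or_adj_or_far (a b : ℕ) : a = b ∨ Adj a b ∨ Far a b := by
  unfold Adj Far; omega

theorem not_adj_of_adj_of_adj {a b c : ℕ} (hab : Adj a b) (hbc : Adj b c) : ¬Adj a c := by
  unfold Adj at *; omega

inductive Rel : List ℕ → List ℕ → Prop
  | swap {a b : ℕ} : Far a b → Rel [a, b] [b, a]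
  | braid {a b : ℕ} : Adj a b → Rel [a, b, a] [b, a, b]

def Step (u v : List ℕ) : Prop :=
  ∃ p q x y, Rel x y ∧ u = p ++ x ++ q ∧ v = p ++ y ++ q

/-- Letter `k` stands for the generator `σ_{k+1}`; `u ∼ v` says that the words `u` and `v` are
equal in the positive braid monoid. -/
def Equiv : List ℕ → List ℕ → Prop := Relation.ReflTransGen Step

infix:50 " ∼ " => Equiv

theorem Rel.symm {x y : List ℕ} : Rel x y → Rel y x
  | .swap h => .swap h.symm
  | .braid h => .braid h.symm

theorem Rel.reverse {x y : List ℕ} : Rel x y → Rel x.reverse y.reverse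
  | .swap h => .swap h.symm
  | .braid h => by simpa using Rel.braid h

theorem Rel.length_eq {x y : List ℕ} (h : Rel x y) : x.length = y.length := by
  cases h <;> rfl

theorem Rel.mem_iff {x y : List ℕ} (h : Rel x y) {c : ℕ} : c ∈ x ↔ c ∈ y := by
  cases h <;> simp <;> tauto

theorem Step.symm {u v : List ℕ} : Step u v → Step v u
  | ⟨p, q, x, y, h, hu, hv⟩ => ⟨p, q, y, x, h.symm, hv, hu⟩

namespace Equiv

@[refl] theorem refl (u : List ℕ) : u ∼ u := Relation.ReflTransGen.refl

theorem rfl {u : List ℕ} : u ∼ u := refl u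

theorem trans {u v w : List ℕ} : u ∼ v → v ∼ w → u ∼ w := Relation.ReflTransGen.trans

instance : Trans Equiv Equiv Equiv := ⟨trans⟩

theorem symm {u v : List ℕ} (h : u ∼ v) : v ∼ u := by
  induction h with
  | refl => rfl
  | tail _ hs ih => exact .head hs.symm ih

theorem of_step {u v : List ℕ} (h : Step u v) : u ∼ v := Relation.ReflTransGen.single h

theorem of_rel {x y : List ℕ} (h : Rel x y) : x ∼ y :=
  of_step ⟨[], [], x, y, h, by simp, by simp⟩

theorem append_left {u v : List ℕ} (w : List ℕ) (h : u ∼ v) : w ++ u ∼ w ++ v :=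
  Relation.ReflTransGen.lift (w ++ ·) (fun _ _ ⟨p, q, x, y, hr, hu, hv⟩ =>
    ⟨w ++ p, q, x, y, hr, by simp [hu], by simp [hv]⟩) _ _ h

theorem append_right {u v : List ℕ} (w : List ℕ) (h : u ∼ v) : u ++ w ∼ v ++ w :=
  Relation.ReflTransGen.lift (· ++ w) (fun _ _ ⟨p, q, x, y, hr, hu, hv⟩ =>
    ⟨p, q ++ w, x, y, hr, by simp [hu], by simp [hv]⟩) _ _ h

theorem append {u v u' v' : List ℕ} (h : u ∼ v) (h' : u' ∼ v') : u ++ u' ∼ v ++ v' :=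
  (h.append_right u').trans (h'.append_left v)

theorem cons {u v : List ℕ} (a : ℕ) (h : u ∼ v) : a :: u ∼ a :: v := h.append_left [a]

theorem reverse {u v : List ℕ} (h : u ∼ v) : u.reverse ∼ v.reverse :=
  Relation.ReflTransGen.lift List.reverse (fun _ _ ⟨p, q, x, y, hr, hu, hv⟩ =>
    ⟨q.reverse, p.reverse, x.reverse, y.reverse, hr.reverse, by simp [hu], by simp [hv]⟩) _ _ h

theorem length_eq {u v : List ℕ} (h : u ∼ v) : u.length = v.length := by
  induction h with
  | refl => rfl
  | tail _ hs ih =>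
    obtain ⟨p, q, x, y, hr, rfl, rfl⟩ := hs
    simpa [hr.length_eq] using ih

theorem mem_iff {u v : List ℕ} (h : u ∼ v) {c : ℕ} : c ∈ u ↔ c ∈ v := by
  induction h with
  | refl => rfl
  | tail _ hs ih =>
    obtain ⟨p, q, x, y, hr, rfl, rfl⟩ := hs
    simpa [hr.mem_iff] using ih

theorem swap {a b : ℕ} (h : Far a b) (l : List ℕ) : a :: b :: l ∼ b :: a :: l :=
  (of_rel (.swap h)).append_right l

theorem braid {a b : ℕ} (h : Adj a b) (l : List ℕ) : a :: b :: a :: l ∼ b :: a :: b :: l :=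
  (of_rel (.braid h)).append_right l

end Equiv

/-! ### Garside's key lemma -/

def complement (a b : ℕ) : List ℕ := if a = b then [] else if Adj a b then [b, a] else [b]

/-- `a :: X` and `b :: Y` are right multiples of the least common right multiple
`a :: complement a b = b :: complement b a` of the letters `a` and `b`, with a common cofactor. -/
def Complemented (a b : ℕ) (X Y : List ℕ) : Prop :=
  ∃ Z, X ∼ complement a b ++ Z ∧ Y ∼ complement b a ++ Z

section Complemented

variable {a b : ℕ} {X Y : List ℕ}

theorem complemented_self_iff : Complemented a a X Y ↔ X ∼ Y := by
  simp only [Complemented, complement, if_true, List.nil_append]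
  exact ⟨fun ⟨_, hX, hY⟩ => hX.trans hY.symm, fun h => ⟨Y, h, .rfl⟩⟩

theorem complemented_far_iff (h : Far a b) :
    Complemented a b X Y ↔ ∃ Z, X ∼ b :: Z ∧ Y ∼ a :: Z := by
  have hne : a ≠ b := by unfold Far at h; omega
  have hab : ¬Adj a b := fun h' => h'.not_far h
  have hba : ¬Adj b a := fun h' => h'.not_far h.symm
  simp [Complemented, complement, hne, hne.symm, hab, hba]

theorem complemented_adj_iff (h : Adj a b) :
    Complemented a b X Y ↔ ∃ Z, X ∼ b :: a :: Z ∧ Y ∼ a :: b :: Z := by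
  have hne : a ≠ b := by unfold Adj at h; omega
  simp [Complemented, complement, hne, hne.symm, h, h.symm]

theorem Complemented.equiv_left {X' : List ℕ} (hX : X ∼ X') (h : Complemented a b X' Y) :
    Complemented a b X Y :=
  let ⟨Z, hX', hY⟩ := h
  ⟨Z, hX.trans hX', hY⟩

end Complemented

def ComplementedBelow (n : ℕ) : Prop :=
  ∀ ⦃a b : ℕ⦄ ⦃X Y : List ℕ⦄,
    X.length < n → a :: X ∼ b :: Y → Complemented a b X Y

namespace ComplementedBelow

variable {n a b : ℕ} {X Y : List ℕ}

theorem cancel (ih : ComplementedBelow n) (hX : X.length < n) (h : a :: X ∼ a :: Y) : X ∼ Y :=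
  complemented_self_iff.1 (ih hX h)

theorem far (ih : ComplementedBelow n) (hab : Far a b) (hX : X.length < n)
    (h : a :: X ∼ b :: Y) : ∃ Z, X ∼ b :: Z ∧ Y ∼ a :: Z :=
  (complemented_far_iff hab).1 (ih hX h)

theorem adj (ih : ComplementedBelow n) (hab : Adj a b) (hX : X.length < n)
    (h : a :: X ∼ b :: Y) : ∃ Z, X ∼ b :: a :: Z ∧ Y ∼ a :: b :: Z :=
  (complemented_adj_iff hab).1 (ih hX h)

end ComplementedBelow

section HeadRewrite

variable {b c d : ℕ} {q Y : List ℕ}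

theorem Complemented.swap_head_of_far (ih : ComplementedBelow (q.length + 1)) (hcd : Far c d)
    (hbd : Far b d) (h : Complemented d b (c :: q) Y) : Complemented c b (d :: q) Y := by
  obtain ⟨Z₁, hq, hY⟩ := (complemented_far_iff hbd.symm).1 h
  rcases eq_or_adj_or_far b c with rfl | hbc | hbc
  · exact complemented_self_iff.2 (((ih.cancel (by simp) hq).cons d).trans hY.symm)
  · obtain ⟨Z₂, hq', hZ₁⟩ := ih.adj hbc.symm (by simp) hq
    refine (complemented_adj_iff hbc.symm).2 ⟨d :: Z₂, ?_, ?_⟩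
    · calc d :: q ∼ d :: b :: c :: Z₂ := hq'.cons d
        _ ∼ b :: d :: c :: Z₂ := .swap hbd.symm _
        _ ∼ b :: c :: d :: Z₂ := (Equiv.swap hcd.symm _).cons b
    · calc Y ∼ d :: c :: b :: Z₂ := hY.trans (hZ₁.cons d)
        _ ∼ c :: d :: b :: Z₂ := .swap hcd.symm _
        _ ∼ c :: b :: d :: Z₂ := (Equiv.swap hbd.symm _).cons c
  · obtain ⟨Z₂, hq', hZ₁⟩ := ih.far hbc.symm (by simp) hq
    refine (complemented_far_iff hbc.symm).2 ⟨d :: Z₂, ?_, ?_⟩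
    · exact (hq'.cons d).trans (.swap hbd.symm _)
    · exact (hY.trans (hZ₁.cons d)).trans (.swap hcd.symm _)

theorem Complemented.swap_head_of_adj (ih : ComplementedBelow (q.length + 1)) (hcd : Far c d)
    (hbd : Adj b d) (h : Complemented d b (c :: q) Y) : Complemented c b (d :: q) Y := by
  obtain ⟨Z₁, hq, hY⟩ := (complemented_adj_iff hbd.symm).1 h
  have hZ₁ : Z₁.length + 1 = q.length := by simpa using hq.length_eq.symm
  rcases eq_or_adj_or_far b c with rfl | hbc | hbc
  · exact absurd hcd hbd.not_far
  · obtain ⟨Z₂, hq', hdZ₁⟩ := ih.adj hbc.symm (by simp) hq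
    obtain ⟨Z₃, hZ₁', hbZ₂⟩ := ih.far hcd.symm (by omega) hdZ₁
    have hZ₂ : Z₁.length = Z₂.length + 1 := by simpa using hdZ₁.length_eq
    obtain ⟨Z₄, hZ₂', hZ₃⟩ := ih.adj hbd (by omega) hbZ₂
    refine (complemented_adj_iff hbc.symm).2 ⟨d :: b :: c :: Z₄, ?_, ?_⟩
    · calc d :: q ∼ d :: b :: c :: d :: b :: Z₄ :=
            (hq'.trans (hZ₂'.append_left [b, c])).cons d
        _ ∼ d :: b :: d :: c :: b :: Z₄ := (Equiv.swap hcd _).append_left [d, b]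
        _ ∼ b :: d :: b :: c :: b :: Z₄ := .braid hbd.symm _
        _ ∼ b :: d :: c :: b :: c :: Z₄ := (Equiv.braid hbc _).append_left [b, d]
        _ ∼ b :: c :: d :: b :: c :: Z₄ := (Equiv.swap hcd.symm _).cons b
    · calc Y ∼ d :: b :: c :: b :: d :: Z₄ :=
            hY.trans ((hZ₁'.trans (hZ₃.cons c)).append_left [d, b])
        _ ∼ d :: c :: b :: c :: d :: Z₄ := (Equiv.braid hbc _).cons d
        _ ∼ c :: d :: b :: c :: d :: Z₄ := .swap hcd.symm _
        _ ∼ c :: d :: b :: d :: c :: Z₄ := (Equiv.swap hcd _).append_left [c, d, b]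
        _ ∼ c :: b :: d :: b :: c :: Z₄ := (Equiv.braid hbd.symm _).cons c
  · obtain ⟨Z₂, hq', hdZ₁⟩ := ih.far hbc.symm (by simp) hq
    obtain ⟨Z₃, hZ₁', hZ₂⟩ := ih.far hcd.symm (by omega) hdZ₁
    refine (complemented_far_iff hbc.symm).2 ⟨d :: b :: Z₃, ?_, ?_⟩
    · exact ((hq'.trans (hZ₂.cons b)).cons d).trans (.braid hbd.symm _)
    · calc Y ∼ d :: b :: c :: Z₃ := hY.trans (hZ₁'.append_left [d, b])
        _ ∼ d :: c :: b :: Z₃ := (Equiv.swap hbc _).cons d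
        _ ∼ c :: d :: b :: Z₃ := .swap hcd.symm _

theorem Complemented.swap_head (ih : ComplementedBelow (q.length + 1)) (hcd : Far c d)
    (h : Complemented d b (c :: q) Y) : Complemented c b (d :: q) Y := by
  rcases eq_or_adj_or_far b d with rfl | hbd | hbd
  · exact (complemented_far_iff hcd).2 ⟨q, .rfl, (complemented_self_iff.1 h).symm⟩
  · exact h.swap_head_of_adj ih hcd hbd
  · exact h.swap_head_of_far ih hcd hbd

theorem Complemented.braid_head_of_adj (ih : ComplementedBelow (q.length + 2)) (hcd : Adj c d)
    (hbd : Adj b d) (h : Complemented d b (c :: d :: q) Y) :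
    Complemented c b (d :: c :: q) Y := by
  obtain ⟨Z₁, hq, hY⟩ := (complemented_adj_iff hbd.symm).1 h
  have hZ₁ : Z₁.length = q.length := by simpa using hq.length_eq.symm
  rcases eq_or_adj_or_far b c with rfl | hbc | hbc
  · have hqZ₁ : q ∼ Z₁ := ih.cancel (by simp) (ih.cancel (by simp) hq)
    exact complemented_self_iff.2 ((hqZ₁.append_left [d, b]).trans hY.symm)
  · exact absurd hcd (not_adj_of_adj_of_adj hbc.symm hbd)
  · obtain ⟨Z₂, hdq, hdZ₁⟩ := ih.far hbc.symm (by simp) hq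
    have hZ₂ : Z₂.length = q.length := by simpa using hdq.length_eq.symm
    obtain ⟨Z₃, hq', hZ₂'⟩ := ih.adj hbd.symm (by simp) hdq
    obtain ⟨Z₄, hZ₁', hZ₂''⟩ := ih.adj hcd.symm (by omega) hdZ₁
    have hZ₃ : Z₃.length + 2 = q.length := by simpa using hZ₂'.length_eq.symm.trans hZ₂
    obtain ⟨Z₅, hZ₃', hZ₄⟩ :=
      ih.far hbc (by omega) (ih.cancel (by simp; omega) (hZ₂'.symm.trans hZ₂''))
    refine (complemented_far_iff hbc.symm).2 ⟨d :: b :: c :: d :: Z₅, ?_, ?_⟩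
    · calc d :: c :: q ∼ d :: c :: b :: d :: c :: Z₅ :=
            (hq'.trans (hZ₃'.append_left [b, d])).append_left [d, c]
        _ ∼ d :: b :: c :: d :: c :: Z₅ := (Equiv.swap hbc.symm _).cons d
        _ ∼ d :: b :: d :: c :: d :: Z₅ := (Equiv.braid hcd _).append_left [d, b]
        _ ∼ b :: d :: b :: c :: d :: Z₅ := .braid hbd.symm _
    · calc Y ∼ d :: b :: c :: d :: b :: Z₅ :=
            hY.trans ((hZ₁'.trans (hZ₄.append_left [c, d])).append_left [d, b])
        _ ∼ d :: c :: b :: d :: b :: Z₅ := (Equiv.swap hbc _).cons d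
        _ ∼ d :: c :: d :: b :: d :: Z₅ := (Equiv.braid hbd _).append_left [d, c]
        _ ∼ c :: d :: c :: b :: d :: Z₅ := .braid hcd.symm _
        _ ∼ c :: d :: b :: c :: d :: Z₅ := (Equiv.swap hbc.symm _).append_left [c, d]

theorem Complemented.braid_head_of_far (ih : ComplementedBelow (q.length + 2)) (hcd : Adj c d)
    (hbd : Far b d) (h : Complemented d b (c :: d :: q) Y) :
    Complemented c b (d :: c :: q) Y := by
  obtain ⟨Z₁, hq, hY⟩ := (complemented_far_iff hbd.symm).1 h
  rcases eq_or_adj_or_far b c with rfl | hbc | hbc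
  · exact absurd hbd hcd.not_far
  · obtain ⟨Z₂, hdq, hZ₁⟩ := ih.adj hbc.symm (by simp) hq
    have hZ₂ : Z₂.length + 1 = q.length := by simpa using hdq.length_eq.symm
    obtain ⟨Z₃, hq', hcZ₂⟩ := ih.far hbd.symm (by simp) hdq
    obtain ⟨Z₄, hZ₂', hZ₃⟩ := ih.adj hcd (by omega) hcZ₂
    refine (complemented_adj_iff hbc.symm).2 ⟨d :: c :: b :: Z₄, ?_, ?_⟩
    · calc d :: c :: q ∼ d :: c :: b :: c :: d :: Z₄ :=
            (hq'.trans (hZ₃.cons b)).append_left [d, c]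
        _ ∼ d :: b :: c :: b :: d :: Z₄ := (Equiv.braid hbc.symm _).cons d
        _ ∼ b :: d :: c :: b :: d :: Z₄ := .swap hbd.symm _
        _ ∼ b :: d :: c :: d :: b :: Z₄ := (Equiv.swap hbd _).append_left [b, d, c]
        _ ∼ b :: c :: d :: c :: b :: Z₄ := (Equiv.braid hcd.symm _).cons b
    · calc Y ∼ d :: c :: b :: d :: c :: Z₄ :=
            hY.trans ((hZ₁.trans (hZ₂'.append_left [c, b])).cons d)
        _ ∼ d :: c :: d :: b :: c :: Z₄ := (Equiv.swap hbd _).append_left [d, c]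
        _ ∼ c :: d :: c :: b :: c :: Z₄ := .braid hcd.symm _
        _ ∼ c :: d :: b :: c :: b :: Z₄ := (Equiv.braid hbc.symm _).append_left [c, d]
        _ ∼ c :: b :: d :: c :: b :: Z₄ := (Equiv.swap hbd.symm _).cons c
  · obtain ⟨Z₂, hdq, hZ₁⟩ := ih.far hbc.symm (by simp) hq
    obtain ⟨Z₃, hq', hZ₂⟩ := ih.far hbd.symm (by simp) hdq
    refine (complemented_far_iff hbc.symm).2 ⟨d :: c :: Z₃, ?_, ?_⟩
    · calc d :: c :: q ∼ d :: c :: b :: Z₃ := hq'.append_left [d, c]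
        _ ∼ d :: b :: c :: Z₃ := (Equiv.swap hbc.symm _).cons d
        _ ∼ b :: d :: c :: Z₃ := .swap hbd.symm _
    · exact (hY.trans ((hZ₁.trans (hZ₂.cons c)).cons d)).trans (.braid hcd.symm _)

theorem Complemented.braid_head (ih : ComplementedBelow (q.length + 2)) (hcd : Adj c d)
    (h : Complemented d b (c :: d :: q) Y) : Complemented c b (d :: c :: q) Y := by
  rcases eq_or_adj_or_far b d with rfl | hbd | hbd
  · exact (complemented_adj_iff hcd).2 ⟨q, .rfl, (complemented_self_iff.1 h).symm⟩
  · exact h.braid_head_of_adj ih hcd hbd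
  · exact h.braid_head_of_far ih hcd hbd

end HeadRewrite

theorem Complemented.of_step {b c : ℕ} {U w Y : List ℕ} (ih : ComplementedBelow U.length)
    (hs : Step (c :: U) w) (h : ∀ c' U', w = c' :: U' → Complemented c' b U' Y) :
    Complemented c b U Y := by
  obtain ⟨p, q, x, y, hxy, hU, rfl⟩ := hs
  cases p with
  | cons e p =>
    obtain ⟨rfl, rfl⟩ : c = e ∧ U = p ++ x ++ q := by simpa using hU
    exact (h c _ rfl).equiv_left (.of_step ⟨p, q, x, y, hxy, rfl, rfl⟩)
  | nil =>
    cases hxy with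
    | swap hcd =>
      obtain ⟨rfl, rfl⟩ := List.cons_eq_cons.1 hU
      exact (h _ _ rfl).swap_head ih hcd
    | braid hcd =>
      obtain ⟨rfl, rfl⟩ := List.cons_eq_cons.1 hU
      exact (h _ _ rfl).braid_head ih hcd

theorem complemented_of_cons_equiv {a b : ℕ} {X Y : List ℕ} (h : a :: X ∼ b :: Y) :
    Complemented a b X Y := by
  obtain ⟨n, hn⟩ : ∃ n, X.length = n := ⟨_, rfl⟩
  induction n using Nat.strong_induction_on generalizing a b X Y with
  | _ n ih' =>
  have ih : ComplementedBelow n := fun _ _ _ _ hX h => ih' _ hX h rfl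
  have hY : Y.length = n := by simpa [hn] using h.length_eq.symm
  suffices ∀ w, w ∼ b :: Y → ∀ c U, w = c :: U → Complemented c b U Y from
    this _ h a X rfl
  intro w hw
  induction hw using Relation.ReflTransGen.head_induction_on with
  | refl => rintro c U ⟨⟩; exact complemented_self_iff.2 .rfl
  | head hs hw ihw =>
    rintro c U rfl
    have hU : U.length = n := by simpa [hY] using ((Equiv.of_step hs).trans hw).length_eq
    exact .of_step (hU ▸ ih) hs ihw

theorem Equiv.cons_cancel {a : ℕ} {u v : List ℕ} (h : a :: u ∼ a :: v) : u ∼ v :=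
  complemented_self_iff.1 (complemented_of_cons_equiv h)

theorem Equiv.append_left_cancel {u v : List ℕ} (w : List ℕ) (h : w ++ u ∼ w ++ v) :
    u ∼ v := by
  induction w with
  | nil => exact h
  | cons a w ih => exact ih h.cons_cancel

theorem Equiv.append_right_cancel {u v : List ℕ} (w : List ℕ) (h : u ++ w ∼ v ++ w) :
    u ∼ v := by
  have := (Equiv.append_left_cancel w.reverse (by simpa using h.reverse)).reverse
  rwa [List.reverse_reverse, List.reverse_reverse] at this

theorem exists_equiv_cons_of_far {a b : ℕ} {X Y : List ℕ} (hab : Far a b)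
    (h : a :: X ∼ b :: Y) : ∃ Z, X ∼ b :: Z ∧ Y ∼ a :: Z :=
  (complemented_far_iff hab).1 (complemented_of_cons_equiv h)

theorem exists_equiv_cons_of_adj {a b : ℕ} {X Y : List ℕ} (hab : Adj a b)
    (h : a :: X ∼ b :: Y) : ∃ Z, X ∼ b :: a :: Z ∧ Y ∼ a :: b :: Z :=
  (complemented_adj_iff hab).1 (complemented_of_cons_equiv h)

theorem Rel.exists_ne {x y : List ℕ} (h : Rel x y) : ∃ a ∈ x, ∃ b ∈ x, a ≠ b := by
  cases h with
  | @swap a b h => exact ⟨a, by simp, b, by simp, by unfold Far at h; omega⟩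
  | @braid a b h => exact ⟨a, by simp, b, by simp, by unfold Adj at h; omega⟩

theorem eq_of_replicate_equiv {m i : ℕ} {w : List ℕ} (h : List.replicate m i ∼ w) :
    w = List.replicate m i := by
  rcases Relation.ReflTransGen.cases_head h with rfl | ⟨_, ⟨p, q, x, y, hxy, hx, -⟩, -⟩
  · rfl
  obtain ⟨a, ha, b, hb, hab⟩ := hxy.exists_ne
  have hmem : ∀ c ∈ x, c = i := fun c hc =>
    List.eq_of_mem_replicate (n := m) (by rw [hx]; simp [hc])
  exact absurd ((hmem a ha).trans (hmem b hb).symm) hab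

theorem exists_equiv_of_replicate_append_of_far {k a j : ℕ} {V Z : List ℕ} (hfar : Far a j)
    (h : List.replicate k j ++ V ∼ a :: Z) :
    ∃ Z', V ∼ a :: Z' ∧ Z ∼ List.replicate k j ++ Z' := by
  induction k generalizing Z with
  | zero => exact ⟨Z, h, .rfl⟩
  | succ k ih =>
    obtain ⟨T, hT, hZ⟩ := exists_equiv_cons_of_far hfar.symm h
    obtain ⟨Z', hV, hT'⟩ := ih hT
    exact ⟨Z', hV, hZ.trans (hT'.cons j)⟩

theorem exists_equiv_of_replicate_append_of_adj {k a j : ℕ} {V Z : List ℕ} (hadj : Adj a j)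
    (h : List.replicate k j ++ V ∼ a :: j :: Z) :
    ∃ Z', V ∼ a :: j :: Z' ∧ Z ∼ List.replicate k a ++ Z' := by
  induction k generalizing Z with
  | zero => exact ⟨Z, h, .rfl⟩
  | succ k ih =>
    obtain ⟨T, hT, hZ⟩ := exists_equiv_cons_of_adj hadj.symm h
    obtain ⟨Z', hV, hT'⟩ := ih hT
    exact ⟨Z', hV, hZ.cons_cancel.trans (hT'.cons a)⟩

theorem append_equiv_cons_of_append_replicate_equiv {W : List ℕ} {i j m : ℕ} (hm : m ≠ 0)
    (h : W ++ List.replicate m i ∼ List.replicate m j ++ W) : W ++ [i] ∼ j :: W := by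
  obtain ⟨n, hn⟩ : ∃ n, W.length = n := ⟨_, rfl⟩
  induction n using Nat.strong_induction_on generalizing W j with
  | _ n ih =>
  obtain ⟨k, rfl⟩ : ∃ k, m = k + 1 := Nat.exists_eq_succ_of_ne_zero hm
  cases W with
  | nil =>
    have hij := List.replicate_right_injective hm (eq_of_replicate_equiv (by simpa using h))
    simp [hij, Equiv.rfl]
  | cons a W₀ =>
    have hW₀ : W₀.length < n := by simp [← hn]
    have h' : a :: (W₀ ++ List.replicate (k + 1) i) ∼
        j :: (List.replicate k j ++ a :: W₀) := by
      simpa [List.replicate_succ] using h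
    rcases eq_or_adj_or_far a j with rfl | hadj | hfar
    · have h₀ : W₀ ++ List.replicate (k + 1) i ∼ List.replicate (k + 1) a ++ W₀ := by
        simpa [List.replicate_succ'] using h'.cons_cancel
      exact (ih _ hW₀ h₀ rfl).cons a
    · obtain ⟨Z, hW₀i, hZ⟩ := exists_equiv_cons_of_adj hadj h'
      obtain ⟨Z', hW₀', hZZ'⟩ := exists_equiv_of_replicate_append_of_adj hadj hZ
      have hW₀j : W₀ ∼ j :: Z' := hW₀'.cons_cancel
      have hZ' : Z' ++ List.replicate (k + 1) i ∼ List.replicate (k + 1) a ++ Z' :=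
        Equiv.cons_cancel (a := j) <|
          ((hW₀j.append_right _).symm.trans hW₀i).trans ((hZZ'.cons a).cons j)
      have hZ'len : Z'.length < n := by have := hW₀j.length_eq; simp at this; omega
      calc a :: W₀ ++ [i] ∼ a :: j :: (Z' ++ [i]) := (hW₀j.append_right [i]).cons a
        _ ∼ a :: j :: a :: Z' := ((ih _ hZ'len hZ' rfl).cons j).cons a
        _ ∼ j :: a :: j :: Z' := .braid hadj Z'
        _ ∼ j :: a :: W₀ := (hW₀j.symm.cons a).cons j
    · obtain ⟨Z, hW₀i, hZ⟩ := exists_equiv_cons_of_far hfar h'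
      obtain ⟨Z', hW₀', hZZ'⟩ := exists_equiv_of_replicate_append_of_far hfar hZ
      have hW₀Z' : W₀ ∼ Z' := hW₀'.cons_cancel
      have h₀ : W₀ ++ List.replicate (k + 1) i ∼ List.replicate (k + 1) j ++ W₀ :=
        hW₀i.trans ((hZZ'.trans (hW₀Z'.symm.append_left _)).cons j)
      exact ((ih _ hW₀ h₀ rfl).cons a).trans (.swap hfar W₀)

/-! ### The fundamental braid and common multiples -/

theorem append_singleton_equiv_cons_of_far {c : ℕ} {w : List ℕ} (h : ∀ x ∈ w, Far x c) :
    w ++ [c] ∼ c :: w := by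
  induction w with
  | nil => rfl
  | cons a w ih =>
    exact ((ih fun x hx => h x (by simp [hx])).cons a).trans (.swap (h a (by simp)) w)

theorem range_append_equiv {a k : ℕ} (h : a + 1 < k) :
    List.range k ++ [a] ∼ (a + 1) :: List.range k := by
  induction k with
  | zero => omega
  | succ k ih =>
    rcases Nat.lt_or_ge (a + 1) k with hak | hak
    · calc List.range (k + 1) ++ [a] = List.range k ++ [k, a] := by simp [List.range_succ]
        _ ∼ List.range k ++ [a, k] := (Equiv.swap (by unfold Far; omega) []).append_left _
        _ = (List.range k ++ [a]) ++ [k] := by simp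
        _ ∼ (a + 1) :: List.range (k + 1) := by
          simpa [List.range_succ] using (ih hak).append_right [k]
    · obtain rfl : k = a + 1 := by omega
      have hfar : ∀ x ∈ List.range a, Far x (a + 1) := by
        intro x hx; simp at hx; unfold Far; omega
      calc List.range (a + 2) ++ [a] = List.range a ++ [a, a + 1, a] := by simp [List.range_succ]
        _ ∼ List.range a ++ [a + 1, a, a + 1] := (Equiv.braid (Or.inl rfl) []).append_left _
        _ = (List.range a ++ [a + 1]) ++ [a, a + 1] := by simp
        _ ∼ (a + 1) :: List.range (a + 2) := by
          simpa [List.range_succ] using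
            (append_singleton_equiv_cons_of_far hfar).append_right [a, a + 1]

theorem cons_reverse_range_equiv {a k : ℕ} (h : a + 1 < k) :
    a :: (List.range k).reverse ∼ (List.range k).reverse ++ [a + 1] := by
  simpa using (range_append_equiv h).reverse

/-- Garside's fundamental braid of the braid monoid on the letters `0, …, m - 1`,
as the word `(0 ⋯ m-1)(0 ⋯ m-2) ⋯ (0 1)(0)`. -/
def delta : ℕ → List ℕ
  | 0 => []
  | m + 1 => List.range (m + 1) ++ delta m

theorem lt_of_mem_delta {m x : ℕ} (h : x ∈ delta m) : x < m := by
  induction m with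
  | zero => simp [delta] at h
  | succ m ih =>
    rcases List.mem_append.1 h with h | h
    · exact List.mem_range.1 h
    · exact (ih h).trans m.lt_succ_self

theorem delta_succ_equiv (m : ℕ) : delta (m + 1) ∼ delta m ++ (List.range (m + 1)).reverse := by
  induction m with
  | zero => rfl
  | succ m ih =>
    have hfar : ∀ x ∈ delta m, Far x (m + 1) := fun x hx => by
      have := lt_of_mem_delta hx; unfold Far; omega
    calc delta (m + 2) ∼ List.range (m + 2) ++ (delta m ++ (List.range (m + 1)).reverse) :=
          ih.append_left _
      _ = List.range (m + 1) ++ ([m + 1] ++ delta m) ++ (List.range (m + 1)).reverse := by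
          simp [List.range_succ]
      _ ∼ List.range (m + 1) ++ (delta m ++ [m + 1]) ++ (List.range (m + 1)).reverse :=
          (((append_singleton_equiv_cons_of_far hfar).symm).append_left _).append_right _
      _ = delta (m + 1) ++ (List.range (m + 2)).reverse := by simp [delta, List.range_succ]

theorem exists_delta_equiv_cons {a m : ℕ} (h : a < m) : ∃ w, delta m ∼ a :: w := by
  induction m generalizing a with
  | zero => omega
  | succ m ih =>
    rcases a with _ | b
    · exact ⟨_, by rw [delta, List.range_succ_eq_map]; rfl⟩
    · obtain ⟨w, hw⟩ := ih (Nat.lt_of_succ_lt_succ h)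
      refine ⟨List.range (m + 1) ++ w, ?_⟩
      calc delta (m + 1) ∼ List.range (m + 1) ++ [b] ++ w := by
            simpa [delta] using hw.append_left _
        _ ∼ (b + 1) :: (List.range (m + 1) ++ w) := (range_append_equiv (by omega)).append_right w

theorem cons_delta_equiv {a m : ℕ} (h : a < m) : a :: delta m ∼ delta m ++ [m - 1 - a] := by
  induction m generalizing a with
  | zero => omega
  | succ m ih =>
    rcases a with _ | b
    · rcases m with _ | m
      · rfl
      calc 0 :: delta (m + 2) ∼ 0 :: (delta (m + 1) ++ (List.range (m + 2)).reverse) :=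
            (delta_succ_equiv (m + 1)).cons 0
        _ ∼ delta (m + 1) ++ m :: (List.range (m + 2)).reverse := by
            simpa using (ih (a := 0) (by omega)).append_right (List.range (m + 2)).reverse
        _ ∼ delta (m + 1) ++ (List.range (m + 2)).reverse ++ [m + 1] := by
            simpa using (cons_reverse_range_equiv (a := m) (by omega)).append_left (delta (m + 1))
        _ ∼ delta (m + 2) ++ [m + 2 - 1 - 0] := (delta_succ_equiv (m + 1)).symm.append_right _
    · calc (b + 1) :: delta (m + 1) ∼ List.range (m + 1) ++ b :: delta m := by
            simpa [delta] using (range_append_equiv (by omega)).symm.append_right (delta m)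
        _ ∼ delta (m + 1) ++ [m - 1 - b] := by
            simpa [delta] using (ih (Nat.lt_of_succ_lt_succ h)).append_left (List.range (m + 1))
        _ = delta (m + 1) ++ [m + 1 - 1 - (b + 1)] := by
            rw [show m + 1 - 1 - (b + 1) = m - 1 - b by omega]

theorem exists_cons_deltaPow_equiv {a m : ℕ} (h : a < m) (k : ℕ) :
    ∃ a' < m, a :: (List.replicate k (delta m)).flatten ∼
      (List.replicate k (delta m)).flatten ++ [a'] := by
  induction k generalizing a with
  | zero => exact ⟨a, h, .rfl⟩
  | succ k ih =>
    obtain ⟨a', ha', h'⟩ := ih (a := m - 1 - a) (by omega)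
    refine ⟨a', ha', ?_⟩
    set F := (List.replicate k (delta m)).flatten
    have : a :: (delta m ++ F) ∼ delta m ++ F ++ [a'] :=
      calc a :: (delta m ++ F) ∼ delta m ++ (m - 1 - a) :: F := by
            simpa using (cons_delta_equiv h).append_right F
        _ ∼ delta m ++ F ++ [a'] := by simpa using h'.append_left (delta m)
    simpa [List.replicate_succ] using this

theorem exists_append_equiv_deltaPow {m : ℕ} {u : List ℕ} (hu : ∀ x ∈ u, x < m) :
    ∃ w, u ++ w ∼ (List.replicate u.length (delta m)).flatten := by
  induction u with
  | nil => exact ⟨[], .rfl⟩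
  | cons a u ih =>
    obtain ⟨w, hw⟩ := ih fun x hx => hu x (by simp [hx])
    obtain ⟨a', ha', hconj⟩ := exists_cons_deltaPow_equiv (hu a (by simp)) u.length
    obtain ⟨v, hv⟩ := exists_delta_equiv_cons ha'
    refine ⟨w ++ v, ?_⟩
    calc a :: u ++ (w ++ v) ∼ a :: (List.replicate u.length (delta m)).flatten ++ v := by
          simpa using (hw.append_right v).cons a
      _ ∼ (List.replicate u.length (delta m)).flatten ++ a' :: v := by
          simpa using hconj.append_right v
      _ ∼ (List.replicate (a :: u).length (delta m)).flatten := by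
          simpa [List.replicate_succ'] using hv.symm.append_left _

theorem exists_common_left_multiple (u v : List ℕ) : ∃ u' v', u' ++ u ∼ v' ++ v := by
  have hbound : ∀ x ∈ u ++ v, x < u.sum + v.sum + 1 := by
    intro x hx
    rcases List.mem_append.1 hx with hx | hx <;>
      · have := List.le_sum_of_mem hx; omega
  obtain ⟨w₁, hw₁⟩ := exists_append_equiv_deltaPow (u := u.reverse) fun x hx =>
    hbound x (List.mem_append_left _ (List.mem_reverse.1 hx))
  obtain ⟨w₂, hw₂⟩ := exists_append_equiv_deltaPow (u := v.reverse) fun x hx =>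
    hbound x (List.mem_append_right _ (List.mem_reverse.1 hx))
  set Δ := fun k => (List.replicate k (delta (u.sum + v.sum + 1))).flatten
  have hcomm : Δ u.length ++ Δ v.length = Δ v.length ++ Δ u.length := by
    simp only [Δ, ← List.flatten_append, ← List.replicate_add, Nat.add_comm]
  rw [List.length_reverse] at hw₁ hw₂
  refine ⟨(w₁ ++ Δ v.length).reverse, (w₂ ++ Δ u.length).reverse, ?_⟩
  have : u.reverse ++ (w₁ ++ Δ v.length) ∼ v.reverse ++ (w₂ ++ Δ u.length) :=
    calc u.reverse ++ (w₁ ++ Δ v.length) = (u.reverse ++ w₁) ++ Δ v.length := by simp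
      _ ∼ Δ u.length ++ Δ v.length := hw₁.append_right _
      _ = Δ v.length ++ Δ u.length := hcomm
      _ ∼ (v.reverse ++ w₂) ++ Δ u.length := (hw₂.append_right _).symm
      _ = v.reverse ++ (w₂ ++ Δ u.length) := by simp
  simpa using this.reverse

end BraidWord

open BraidWord

/-! ### The positive braid monoid and its group of fractions -/

def braidCon : Con (FreeMonoid ℕ) where
  r u v := u.toList ∼ v.toList
  iseqv := ⟨fun _ => .rfl, .symm, .trans⟩
  mul' h h' := by simpa using h.append h'

/-- The positive braid monoid on infinitely many strands, so that words need no bound on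
their letters. -/
abbrev PosBraid : Type := braidCon.Quotient

namespace PosBraid

def mk (l : List ℕ) : PosBraid := (FreeMonoid.ofList l : FreeMonoid ℕ)

theorem mk_append (u v : List ℕ) : mk (u ++ v) = mk u * mk v := by
  simp [mk, FreeMonoid.ofList_append, Con.coe_mul]

theorem mk_eq_mk {u v : List ℕ} : mk u = mk v ↔ u ∼ v := Con.eq _

theorem exists_mk_eq (x : PosBraid) : ∃ l, mk l = x :=
  Con.induction_on x fun w => ⟨w.toList, rfl⟩

instance : IsCancelMul PosBraid where
  mul_left_cancel x y z h := by
    obtain ⟨u, rfl⟩ := exists_mk_eq x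
    obtain ⟨v, rfl⟩ := exists_mk_eq y
    obtain ⟨w, rfl⟩ := exists_mk_eq z
    simp only [← mk_append, mk_eq_mk] at h ⊢
    exact h.append_left_cancel u
  mul_right_cancel x y z h := by
    obtain ⟨u, rfl⟩ := exists_mk_eq x
    obtain ⟨v, rfl⟩ := exists_mk_eq y
    obtain ⟨w, rfl⟩ := exists_mk_eq z
    simp only [← mk_append, mk_eq_mk] at h ⊢
    exact h.append_right_cancel u

theorem exists_mul_eq_mul (r s : PosBraid) : ∃ r' s' : PosBraid, s' * r = r' * s := by
  obtain ⟨u, rfl⟩ := exists_mk_eq r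
  obtain ⟨v, rfl⟩ := exists_mk_eq s
  obtain ⟨u', v', h⟩ := exists_common_left_multiple u v
  exact ⟨mk v', mk u', by rw [← mk_append, ← mk_append, mk_eq_mk]; exact h⟩

noncomputable instance : OreLocalization.OreSet (⊤ : Submonoid PosBraid) where
  ore_right_cancel _ _ _ h := ⟨1, by rw [mul_right_cancel h]⟩
  oreNum r s := (exists_mul_eq_mul r s).choose
  oreDenom r s := ⟨(exists_mul_eq_mul r s).choose_spec.choose, Submonoid.mem_top _⟩
  ore_eq r s := (exists_mul_eq_mul r s).choose_spec.choose_spec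

/-- The Ore localization at `⊤` is only a monoid; its units form the group of fractions. -/
noncomputable def toUnits : PosBraid →* (OreLocalization (⊤ : Submonoid PosBraid) PosBraid)ˣ :=
  IsUnit.liftRight OreLocalization.numeratorHom fun r =>
    OreLocalization.numerator_isUnit ⟨r, Submonoid.mem_top r⟩

theorem toUnits_injective : Function.Injective toUnits := by
  intro r₁ r₂ h
  have h' := congrArg Units.val h
  rw [toUnits, IsUnit.coe_liftRight, IsUnit.coe_liftRight] at h'
  rw [OreLocalization.numeratorHom_apply, OreLocalization.numeratorHom_apply,
    OreLocalization.oreDiv_eq_iff] at h'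
  obtain ⟨u, v, h₁, h₂⟩ := h'
  simp only [OneMemClass.coe_one, mul_one] at h₂
  rw [Submonoid.smul_def, smul_eq_mul, smul_eq_mul, h₂] at h₁
  exact (mul_left_cancel h₁).symm

end PosBraid

/-! ### Positive words in `B_n` -/

namespace BraidGroup

variable {n : ℕ}

theorem braidGen_mul_comm {i j : Fin (n - 1)} (h : (i : ℕ) + 2 ≤ j) :
    braidGen n i * braidGen n j = braidGen n j * braidGen n i :=
  PresentedGroup.mk_eq_mk_of_mul_inv_mem ⟨i, j, .inl ⟨h, by group⟩⟩

theorem braidGen_braid {i j : Fin (n - 1)} (h : (j : ℕ) = i + 1) :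
    braidGen n i * braidGen n j * braidGen n i = braidGen n j * braidGen n i * braidGen n j :=
  PresentedGroup.mk_eq_mk_of_mul_inv_mem ⟨i, j, .inr ⟨h, rfl⟩⟩

/-- Letters beyond the last generator of `BraidGroup n` are sent to `1`. -/
def gen (n x : ℕ) : BraidGroup n := if h : x < n - 1 then braidGen n ⟨x, h⟩ else 1

@[simp] theorem gen_val (i : Fin (n - 1)) : gen n i = braidGen n i := by simp [gen]

def ofWord (n : ℕ) (l : List ℕ) : BraidGroup n := (l.map (gen n)).prod

@[simp] theorem ofWord_nil : ofWord n [] = 1 := rfl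

@[simp] theorem ofWord_cons (a : ℕ) (l : List ℕ) : ofWord n (a :: l) = gen n a * ofWord n l :=
  List.prod_cons

@[simp] theorem ofWord_append (u v : List ℕ) : ofWord n (u ++ v) = ofWord n u * ofWord n v := by
  simp [ofWord]

@[simp] theorem ofWord_replicate (k : ℕ) (i : Fin (n - 1)) :
    ofWord n (List.replicate k i) = braidGen n i ^ k := by
  simp [ofWord]

theorem ofWord_eq_of_rel {x y : List ℕ} (hx : ∀ c ∈ x, c < n - 1) (h : Rel x y) :
    ofWord n x = ofWord n y := by
  cases h with
  | @swap a b hab =>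
    lift a to Fin (n - 1) using hx a (by simp)
    lift b to Fin (n - 1) using hx b (by simp)
    simp only [ofWord_cons, ofWord_nil, mul_one, gen_val]
    rcases hab with hab | hab
    · exact braidGen_mul_comm hab
    · exact (braidGen_mul_comm hab).symm
  | @braid a b hab =>
    lift a to Fin (n - 1) using hx a (by simp)
    lift b to Fin (n - 1) using hx b (by simp)
    simp only [ofWord_cons, ofWord_nil, mul_one, gen_val, ← mul_assoc]
    rcases hab with hab | hab
    · exact braidGen_braid hab
    · exact (braidGen_braid hab).symm

theorem ofWord_eq_of_equiv {u v : List ℕ} (hu : ∀ c ∈ u, c < n - 1) (h : u ∼ v) :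
    ofWord n u = ofWord n v := by
  induction h with
  | refl => rfl
  | @tail v w huv hs ih =>
    obtain ⟨p, q, x, y, hxy, rfl, rfl⟩ := hs
    have hx : ∀ c ∈ x, c < n - 1 := fun c hc =>
      hu c ((BraidWord.Equiv.mem_iff huv).2 (by simp [hc]))
    simp [ih, ofWord_eq_of_rel hx hxy]

theorem lift_braidRels_eq_one {G : Type*} [Group G] (φ : PosBraid →* G) :
    ∀ r ∈ braidRels (n - 1),
      FreeGroup.lift (fun i : Fin (n - 1) => φ (PosBraid.mk [i])) r = 1 := by
  rintro r ⟨i, j, ⟨h, rfl⟩ | ⟨h, rfl⟩⟩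
  · have hc : φ (PosBraid.mk [i]) * φ (PosBraid.mk [j]) =
        φ (PosBraid.mk [j]) * φ (PosBraid.mk [i]) := by
      simp only [← map_mul, ← PosBraid.mk_append]
      exact congrArg φ (PosBraid.mk_eq_mk.2 (.swap (Or.inl h) []))
    simp [hc]
  · have hc : φ (PosBraid.mk [i]) * φ (PosBraid.mk [j]) * φ (PosBraid.mk [i]) =
        φ (PosBraid.mk [j]) * φ (PosBraid.mk [i]) * φ (PosBraid.mk [j]) := by
      simp only [← map_mul, ← PosBraid.mk_append]
      exact congrArg φ (PosBraid.mk_eq_mk.2 (.braid (Or.inl h) []))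
    simp [hc]

noncomputable def toFrac (n : ℕ) :
    BraidGroup n →* (OreLocalization (⊤ : Submonoid PosBraid) PosBraid)ˣ :=
  PresentedGroup.toGroup (lift_braidRels_eq_one PosBraid.toUnits)

theorem toFrac_ofWord {l : List ℕ} (hl : ∀ c ∈ l, c < n - 1) :
    toFrac n (ofWord n l) = PosBraid.toUnits (PosBraid.mk l) := by
  induction l with
  | nil => exact (map_one _).trans (map_one _).symm
  | cons a l ih =>
    lift a to Fin (n - 1) using hl a (by simp)
    rw [ofWord_cons, gen_val, ← List.singleton_append, PosBraid.mk_append, map_mul, map_mul,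
      ih fun c hc => hl c (by simp [hc])]
    exact congrArg (· * _) (PresentedGroup.toGroup.of _)

theorem equiv_of_ofWord_eq {u v : List ℕ} (h : ofWord n u = ofWord n v)
    (hu : ∀ c ∈ u, c < n - 1) (hv : ∀ c ∈ v, c < n - 1) : u ∼ v :=
  PosBraid.mk_eq_mk.1 <| PosBraid.toUnits_injective <| by
    rw [← toFrac_ofWord hu, ← toFrac_ofWord hv, h]

theorem exists_ofWord_eq_of_mem_closure {W : BraidGroup n}
    (hW : W ∈ Submonoid.closure (Set.range (braidGen n))) :
    ∃ l : List ℕ, (∀ c ∈ l, c < n - 1) ∧ ofWord n l = W := by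
  induction hW using Submonoid.closure_induction with
  | mem _ h =>
    obtain ⟨i, rfl⟩ := h
    exact ⟨[i], by simp, by simp⟩
  | one => exact ⟨[], by simp, rfl⟩
  | mul _ _ _ _ hu hv =>
    obtain ⟨u, hu, rfl⟩ := hu
    obtain ⟨v, hv, rfl⟩ := hv
    exact ⟨u ++ v, List.forall_mem_append.2 ⟨hu, hv⟩, ofWord_append u v⟩

end BraidGroup

theorem positive_conjugator_of_pow_general (n : ℕ) (i j : Fin (n - 1))
    (m : ℕ) (hm : 1 ≤ m) (W : BraidGroup n)
    (hW : W ∈ Submonoid.closure (Set.range (braidGen n)))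
    (h : W * braidGen n i ^ m = braidGen n j ^ m * W) :
    W * braidGen n i = braidGen n j * W := by
  obtain ⟨l, hl, rfl⟩ := BraidGroup.exists_ofWord_eq_of_mem_closure hW
  have hrep (k : ℕ) (a : Fin (n - 1)) : ∀ c ∈ List.replicate k (a : ℕ), c < n - 1 :=
    fun c hc => (List.eq_of_mem_replicate hc) ▸ a.isLt
  have hword : l ++ List.replicate m (i : ℕ) ∼ List.replicate m (j : ℕ) ++ l :=
    BraidGroup.equiv_of_ofWord_eq (n := n) (by simpa using h)
      (List.forall_mem_append.2 ⟨hl, hrep m i⟩) (List.forall_mem_append.2 ⟨hrep m j, hl⟩)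
  simpa using BraidGroup.ofWord_eq_of_equiv (List.forall_mem_append.2 ⟨hl, hrep 1 i⟩)
    (append_equiv_cons_of_append_replicate_equiv (by omega) hword)

/-- If a positive braid `W` satisfies `W σᵢᵐ = σⱼᵐ W` for some `m ≥ 1`,
then `W σᵢ = σⱼ W`. -/
theorem positive_conjugator_of_pow (n : ℕ) (hn : 2 ≤ n) (i j : Fin (n - 1))
    (m : ℕ) (hm : 1 ≤ m) (W : BraidGroup n)
    (hW : W ∈ Submonoid.closure (Set.range (braidGen n)))
    (h : W * braidGen n i ^ m = braidGen n j ^ m * W) :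
    W * braidGen n i = braidGen n j * W :=
  positive_conjugator_of_pow_general n i j m hm W hW h
end

section
/- Let n ≥ 2 and work in the braid monoid B_n^+ (the monoid presented by generators σ_1, …, σ_{n−1} and the braid relations). Let i, j be indices with |i − j| = 1, let k ≥ 1 be an integer, and let w ∈ B_n^+. If σ_j left-divides σ_i^k · σ_j · w (i.e., σ_i^k · σ_j · w = σ_j · w′ for some w′ ∈ B_n^+), then σ_i left-divides w (i.e., w = σ_i · w″ for some w″ ∈ B_n^+). -/
/-!
Garside's argument. Work with positive words modulo the braid relations of a triangle-free graph
(commutation for non-adjacent letters, `aba = bab` for adjacent ones). If `a·u ≡ b·v`, then both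
sides factor through the least common multiple of `a` and `b`, namely `a`, `aba` or `ab`; this
is proved by strong induction on the length and then along the chain of moves, where only a move
at the head needs work, by a finite case analysis. In particular `σ_i · x ≡ σ_j · y` with
`i, j` adjacent forces `x ≡ σ_j σ_i z`, so the copies of `σ_i` in `σ_i^k σ_j w` can be peeled off
one at a time until `σ_j w ≡ σ_j σ_i z`, and cancelling `σ_j` gives `w ≡ σ_i z`.
-/

/-- The braid relations on the free monoid on `m` generators:
`σᵢσⱼ = σⱼσᵢ` for `|i - j| ≥ 2` and `σᵢσⱼσᵢ = σⱼσᵢσⱼ` for `j = i + 1`. -/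
def braidMonoidRels (m : ℕ) : FreeMonoid (Fin m) → FreeMonoid (Fin m) → Prop :=
  fun a b => ∃ i j : Fin m,
    ((i : ℕ) + 2 ≤ (j : ℕ) ∧ a = .of i * .of j ∧ b = .of j * .of i) ∨
    ((j : ℕ) = (i : ℕ) + 1 ∧ a = .of i * .of j * .of i ∧ b = .of j * .of i * .of j)

/-- The braid monoid `B_n⁺`, presented over `Fin (n - 1)`. -/
def BraidMonoid (n : ℕ) : Type := PresentedMonoid (braidMonoidRels (n - 1))

instance (n : ℕ) : Monoid (BraidMonoid n) := by unfold BraidMonoid; infer_instance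

/-- The positive generator `σ_{i+1}` of the braid monoid (0-indexed by `i : Fin (n - 1)`). -/
def braidMonGen (n : ℕ) (i : Fin (n - 1)) : BraidMonoid n :=
  PresentedMonoid.of (braidMonoidRels (n - 1)) i

theorem SimpleGraph.eq_or_adj_or_compl_adj {α : Type*} (G : SimpleGraph α) (a b : α) :
    a = b ∨ G.Adj a b ∨ Gᶜ.Adj a b := by
  by_cases hab : a = b
  · exact .inl hab
  · by_cases h : G.Adj a b
    · exact .inr (.inl h)
    · exact .inr (.inr ((G.compl_adj a b).2 ⟨hab, h⟩))

open SimpleGraph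

namespace BraidWord

variable {α : Type*} (G : SimpleGraph α)

/-- The defining relations of the Artin monoid of `G` with all labels `2` or `3`; the braid monoid
`B_n⁺` is the case of the path graph. -/
inductive Move : List α → List α → Prop
  | swap {a b : α} (s : List α) : Gᶜ.Adj a b → Move (a :: b :: s) (b :: a :: s)
  | braid {a b : α} (s : List α) : G.Adj a b → Move (a :: b :: a :: s) (b :: a :: b :: s)
  | cons (c : α) {x y : List α} : Move x y → Move (c :: x) (c :: y)

def Eqv : List α → List α → Prop := Relation.ReflTransGen (Move G)

variable {G} {a b c : α} {s u v x y z : List α}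

namespace Move

theorem symm (h : Move G x y) : Move G y x := by
  induction h with
  | swap s hab => exact .swap s hab.symm
  | braid s hab => exact .braid s hab.symm
  | cons c _ ih => exact .cons c ih

theorem length_eq (h : Move G x y) : x.length = y.length := by
  induction h <;> simp_all

theorem append_right (h : Move G x y) (t : List α) : Move G (x ++ t) (y ++ t) := by
  induction h with
  | swap s hab => exact .swap (s ++ t) hab
  | braid s hab => exact .braid (s ++ t) hab
  | cons c _ ih => exact .cons c ih

end Move

namespace Eqv

theorem refl (x : List α) : Eqv G x x := Relation.ReflTransGen.refl

theorem trans (h : Eqv G x y) (h' : Eqv G y z) : Eqv G x z := Relation.ReflTransGen.trans h h'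

instance : Trans (Eqv G) (Eqv G) (Eqv G) := ⟨trans⟩

theorem of_move (h : Move G x y) : Eqv G x y := .single h

theorem symm (h : Eqv G x y) : Eqv G y x := by
  induction h with
  | refl => exact refl _
  | tail _ hm ih => exact .head hm.symm ih

@[grind →] theorem length_eq (h : Eqv G x y) : x.length = y.length := by
  induction h with
  | refl => rfl
  | tail _ hm ih => exact ih.trans hm.length_eq

theorem swap (hab : Gᶜ.Adj a b) (s : List α) : Eqv G (a :: b :: s) (b :: a :: s) :=
  of_move (.swap s hab)

theorem braid (hab : G.Adj a b) (s : List α) : Eqv G (a :: b :: a :: s) (b :: a :: b :: s) :=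
  of_move (.braid s hab)

theorem cons (c : α) (h : Eqv G x y) : Eqv G (c :: x) (c :: y) :=
  h.lift (c :: ·) fun _ _ => .cons c

theorem append_left (p : List α) (h : Eqv G x y) : Eqv G (p ++ x) (p ++ y) := by
  induction p with
  | nil => exact h
  | cons c p ih => exact ih.cons c

theorem append {x' y' : List α} (h : Eqv G x y) (h' : Eqv G x' y') :
    Eqv G (x ++ x') (y ++ y') :=
  (h.lift (· ++ x') fun _ _ hm => hm.append_right x').trans (h'.append_left y)

end Eqv

/-- The equivalence `a :: u ≡ b :: v` passes through the least common multiple of `a` and `b`,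
which is `a`, `aba` or `ab`. -/
def FactorsThroughLcm (G : SimpleGraph α) (a : α) (u : List α) (b : α) (v : List α) : Prop :=
  (a = b ∧ Eqv G u v) ∨
  (G.Adj a b ∧ ∃ w, Eqv G u (b :: a :: w) ∧ Eqv G v (a :: b :: w)) ∨
  (Gᶜ.Adj a b ∧ ∃ w, Eqv G u (b :: w) ∧ Eqv G v (a :: w))

namespace FactorsThroughLcm

theorem of_eqv_left {u' : List α} (h : Eqv G u u') (hf : FactorsThroughLcm G a u' b v) :
    FactorsThroughLcm G a u b v := by
  rcases hf with ⟨hab, hu⟩ | ⟨hab, w, hu, hv⟩ | ⟨hab, w, hu, hv⟩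
  · exact .inl ⟨hab, h.trans hu⟩
  · exact .inr (.inl ⟨hab, w, h.trans hu, hv⟩)
  · exact .inr (.inr ⟨hab, w, h.trans hu, hv⟩)

theorem of_eqv_right {v' : List α} (h : Eqv G v v') (hf : FactorsThroughLcm G a u b v') :
    FactorsThroughLcm G a u b v := by
  rcases hf with ⟨hab, hu⟩ | ⟨hab, w, hu, hv⟩ | ⟨hab, w, hu, hv⟩
  · exact .inl ⟨hab, hu.trans h.symm⟩
  · exact .inr (.inl ⟨hab, w, hu, h.trans hv⟩)
  · exact .inr (.inr ⟨hab, w, hu, h.trans hv⟩)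

theorem eqv (hf : FactorsThroughLcm G a u a v) : Eqv G u v := by
  rcases hf with ⟨-, h⟩ | ⟨haa, -⟩ | ⟨haa, -⟩
  · exact h
  · exact absurd rfl haa.ne
  · exact absurd rfl haa.ne

theorem exists_of_adj (hf : FactorsThroughLcm G a u b v) (hab : G.Adj a b) :
    ∃ w, Eqv G u (b :: a :: w) ∧ Eqv G v (a :: b :: w) := by
  rcases hf with ⟨rfl, -⟩ | ⟨-, h⟩ | ⟨hab', -⟩
  · exact absurd rfl hab.ne
  · exact h
  · exact absurd hab ((G.compl_adj a b).1 hab').2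

theorem exists_of_compl_adj (hf : FactorsThroughLcm G a u b v) (hab : Gᶜ.Adj a b) :
    ∃ w, Eqv G u (b :: w) ∧ Eqv G v (a :: w) := by
  rcases hf with ⟨rfl, -⟩ | ⟨hab', -⟩ | ⟨-, h⟩
  · exact absurd rfl hab.ne
  · exact absurd hab' ((G.compl_adj a b).1 hab).2
  · exact h

end FactorsThroughLcm

def FactorsThroughLcmBelow (G : SimpleGraph α) (ℓ : ℕ) : Prop :=
  ∀ ⦃a b : α⦄ ⦃u v : List α⦄, v.length < ℓ → Eqv G (a :: u) (b :: v) →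
    FactorsThroughLcm G a u b v

namespace FactorsThroughLcmBelow

variable {ℓ : ℕ} {w₁ : List α}

theorem mono {ℓ' : ℕ} (ih : FactorsThroughLcmBelow G ℓ') (hℓ : ℓ ≤ ℓ') :
    FactorsThroughLcmBelow G ℓ :=
  fun _ _ _ _ hv => ih (hv.trans_le hℓ)

theorem swap_of_adj (ih : FactorsThroughLcmBelow G (w₁.length + 2)) (hac : Gᶜ.Adj a c)
    (hcb : G.Adj c b) (h : Eqv G (a :: s) (b :: c :: w₁)) :
    FactorsThroughLcm G a (c :: s) b (c :: b :: w₁) := by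
  rcases G.eq_or_adj_or_compl_adj a b with rfl | hab | hab
  · exact absurd hcb.symm ((G.compl_adj a c).1 hac).2
  · obtain ⟨w₂, hs, hw₁⟩ := (ih (by simp) h).exists_of_adj hab
    obtain ⟨w₃, hw₁', hw₂⟩ := (ih (by grind) hw₁).exists_of_compl_adj hac.symm
    obtain ⟨w₄, hw₂', hw₃⟩ := (ih (by grind) hw₂).exists_of_adj hcb.symm
    refine .inr (.inl ⟨hab, c :: b :: a :: w₄, ?_, ?_⟩)
    · calc Eqv G (c :: s) (c :: b :: a :: c :: b :: w₄) :=
            (hs.trans (hw₂'.append_left [b, a])).cons c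
        Eqv G _ (c :: b :: c :: a :: b :: w₄) := (Eqv.swap hac _).append_left [c, b]
        Eqv G _ (b :: c :: b :: a :: b :: w₄) := Eqv.braid hcb _
        Eqv G _ (b :: c :: a :: b :: a :: w₄) := (Eqv.braid hab.symm _).append_left [b, c]
        Eqv G _ (b :: a :: c :: b :: a :: w₄) := (Eqv.swap hac.symm _).cons b
    · calc Eqv G (c :: b :: w₁) (c :: b :: a :: b :: c :: w₄) :=
            (hw₁'.trans (hw₃.cons a)).append_left [c, b]
        Eqv G _ (c :: a :: b :: a :: c :: w₄) := (Eqv.braid hab.symm _).cons c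
        Eqv G _ (a :: c :: b :: a :: c :: w₄) := Eqv.swap hac.symm _
        Eqv G _ (a :: c :: b :: c :: a :: w₄) := (Eqv.swap hac _).append_left [a, c, b]
        Eqv G _ (a :: b :: c :: b :: a :: w₄) := (Eqv.braid hcb _).cons a
  · obtain ⟨w₂, hs, hw₁⟩ := (ih (by simp) h).exists_of_compl_adj hab
    obtain ⟨w₃, hw₁', hw₂⟩ := (ih (by grind) hw₁).exists_of_compl_adj hac.symm
    refine .inr (.inr ⟨hab, c :: b :: w₃, ?_, ?_⟩)
    · calc Eqv G (c :: s) (c :: b :: c :: w₃) := (hs.trans (hw₂.cons b)).cons c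
        Eqv G _ (b :: c :: b :: w₃) := Eqv.braid hcb _
    · calc Eqv G (c :: b :: w₁) (c :: b :: a :: w₃) := (hw₁'.cons b).cons c
        Eqv G _ (c :: a :: b :: w₃) := (Eqv.swap hab.symm _).cons c
        Eqv G _ (a :: c :: b :: w₃) := Eqv.swap hac.symm _

theorem swap_of_compl_adj (ih : FactorsThroughLcmBelow G (w₁.length + 1)) (hac : Gᶜ.Adj a c)
    (hcb : Gᶜ.Adj c b) (h : Eqv G (a :: s) (b :: w₁)) :
    FactorsThroughLcm G a (c :: s) b (c :: w₁) := by
  rcases G.eq_or_adj_or_compl_adj a b with rfl | hab | hab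
  · exact .inl ⟨rfl, (ih (by simp) h).eqv.cons c⟩
  · obtain ⟨w₂, hs, hw₁⟩ := (ih (by simp) h).exists_of_adj hab
    refine .inr (.inl ⟨hab, c :: w₂, ?_, ?_⟩)
    · calc Eqv G (c :: s) (c :: b :: a :: w₂) := hs.cons c
        Eqv G _ (b :: c :: a :: w₂) := Eqv.swap hcb _
        Eqv G _ (b :: a :: c :: w₂) := (Eqv.swap hac.symm _).cons b
    · calc Eqv G (c :: w₁) (c :: a :: b :: w₂) := hw₁.cons c
        Eqv G _ (a :: c :: b :: w₂) := Eqv.swap hac.symm _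
        Eqv G _ (a :: b :: c :: w₂) := (Eqv.swap hcb _).cons a
  · obtain ⟨w₂, hs, hw₁⟩ := (ih (by simp) h).exists_of_compl_adj hab
    exact .inr (.inr ⟨hab, c :: w₂, (hs.cons c).trans (Eqv.swap hcb _),
      (hw₁.cons c).trans (Eqv.swap hac.symm _)⟩)

theorem braid_of_adj (hG : G.CliqueFree 3) (ih : FactorsThroughLcmBelow G (w₁.length + 2))
    (hac : G.Adj a c) (hcb : G.Adj c b) (h : Eqv G (a :: c :: s) (b :: c :: w₁)) :
    FactorsThroughLcm G a (c :: a :: s) b (c :: b :: w₁) := by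
  rcases G.eq_or_adj_or_compl_adj a b with rfl | hab | hab
  · have hs : Eqv G s w₁ := (ih (by simp) (ih (by simp) h).eqv).eqv
    exact .inl ⟨rfl, (hs.cons a).cons c⟩
  · classical exact absurd (is3Clique_triple_iff.2 ⟨hab, hac, hcb.symm⟩) (hG {a, b, c})
  · obtain ⟨w₂, hs, hw₁⟩ := (ih (by simp) h).exists_of_compl_adj hab
    obtain ⟨w₃, hs', hw₂⟩ := (ih (by grind) hs).exists_of_adj hcb
    obtain ⟨w₄, hw₁', hw₂'⟩ := (ih (by grind) hw₁).exists_of_adj hac.symm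
    have hw₃₄ : Eqv G (b :: w₃) (a :: w₄) := (ih (by grind) (hw₂.symm.trans hw₂')).eqv
    obtain ⟨w₅, hw₃, hw₄⟩ := (ih (by grind) hw₃₄).exists_of_compl_adj hab.symm
    refine .inr (.inr ⟨hab, c :: a :: b :: c :: w₅, ?_, ?_⟩)
    · calc Eqv G (c :: a :: s) (c :: a :: b :: c :: a :: w₅) :=
            (hs'.trans (hw₃.append_left [b, c])).append_left [c, a]
        Eqv G _ (c :: b :: a :: c :: a :: w₅) := (Eqv.swap hab _).cons c
        Eqv G _ (c :: b :: c :: a :: c :: w₅) := (Eqv.braid hac _).append_left [c, b]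
        Eqv G _ (b :: c :: b :: a :: c :: w₅) := Eqv.braid hcb _
        Eqv G _ (b :: c :: a :: b :: c :: w₅) := (Eqv.swap hab.symm _).append_left [b, c]
    · calc Eqv G (c :: b :: w₁) (c :: b :: a :: c :: b :: w₅) :=
            (hw₁'.trans (hw₄.append_left [a, c])).append_left [c, b]
        Eqv G _ (c :: a :: b :: c :: b :: w₅) := (Eqv.swap hab.symm _).cons c
        Eqv G _ (c :: a :: c :: b :: c :: w₅) := (Eqv.braid hcb.symm _).append_left [c, a]
        Eqv G _ (a :: c :: a :: b :: c :: w₅) := Eqv.braid hac.symm _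

theorem braid_of_compl_adj (ih : FactorsThroughLcmBelow G (w₁.length + 1)) (hac : G.Adj a c)
    (hcb : Gᶜ.Adj c b) (h : Eqv G (a :: c :: s) (b :: w₁)) :
    FactorsThroughLcm G a (c :: a :: s) b (c :: w₁) := by
  rcases G.eq_or_adj_or_compl_adj a b with rfl | hab | hab
  · exact absurd hac.symm ((G.compl_adj c a).1 hcb).2
  · obtain ⟨w₂, hs, hw₁⟩ := (ih (by simp) h).exists_of_adj hab
    obtain ⟨w₃, hs', hw₂⟩ := (ih (by grind) hs).exists_of_compl_adj hcb
    obtain ⟨w₄, hw₂', hw₃⟩ := (ih (by grind) hw₂).exists_of_adj hac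
    refine .inr (.inl ⟨hab, c :: a :: b :: w₄, ?_, ?_⟩)
    · calc Eqv G (c :: a :: s) (c :: a :: b :: a :: c :: w₄) :=
            (hs'.trans (hw₃.cons b)).append_left [c, a]
        Eqv G _ (c :: b :: a :: b :: c :: w₄) := (Eqv.braid hab _).cons c
        Eqv G _ (b :: c :: a :: b :: c :: w₄) := Eqv.swap hcb _
        Eqv G _ (b :: c :: a :: c :: b :: w₄) := (Eqv.swap hcb.symm _).append_left [b, c, a]
        Eqv G _ (b :: a :: c :: a :: b :: w₄) := (Eqv.braid hac.symm _).cons b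
    · calc Eqv G (c :: w₁) (c :: a :: b :: c :: a :: w₄) :=
            (hw₁.trans (hw₂'.append_left [a, b])).cons c
        Eqv G _ (c :: a :: c :: b :: a :: w₄) := (Eqv.swap hcb.symm _).append_left [c, a]
        Eqv G _ (a :: c :: a :: b :: a :: w₄) := Eqv.braid hac.symm _
        Eqv G _ (a :: c :: b :: a :: b :: w₄) := (Eqv.braid hab _).append_left [a, c]
        Eqv G _ (a :: b :: c :: a :: b :: w₄) := (Eqv.swap hcb _).cons a
  · obtain ⟨w₂, hs, hw₁⟩ := (ih (by simp) h).exists_of_compl_adj hab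
    obtain ⟨w₃, hs', hw₂⟩ := (ih (by grind) hs).exists_of_compl_adj hcb
    refine .inr (.inr ⟨hab, c :: a :: w₃, ?_, ?_⟩)
    · calc Eqv G (c :: a :: s) (c :: a :: b :: w₃) := hs'.append_left [c, a]
        Eqv G _ (c :: b :: a :: w₃) := (Eqv.swap hab _).cons c
        Eqv G _ (b :: c :: a :: w₃) := Eqv.swap hcb _
    · calc Eqv G (c :: w₁) (c :: a :: c :: w₃) := (hw₁.trans (hw₂.cons a)).cons c
        Eqv G _ (a :: c :: a :: w₃) := Eqv.braid hac.symm _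

theorem factorsThroughLcm_swap (ih : FactorsThroughLcmBelow G v.length) (hac : Gᶜ.Adj a c)
    (hf : FactorsThroughLcm G c (a :: s) b v) : FactorsThroughLcm G a (c :: s) b v := by
  rcases hf with ⟨rfl, hv⟩ | ⟨hcb, w, hu, hv⟩ | ⟨hcb, w, hu, hv⟩
  · exact .inr (.inr ⟨hac, s, .refl _, hv.symm⟩)
  · exact ((ih.mono (by simp [hv.length_eq])).swap_of_adj hac hcb hu).of_eqv_right hv
  · exact ((ih.mono (by simp [hv.length_eq])).swap_of_compl_adj hac hcb hu).of_eqv_right hv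

theorem factorsThroughLcm_braid (hG : G.CliqueFree 3) (ih : FactorsThroughLcmBelow G v.length)
    (hac : G.Adj a c) (hf : FactorsThroughLcm G c (a :: c :: s) b v) :
    FactorsThroughLcm G a (c :: a :: s) b v := by
  rcases hf with ⟨rfl, hv⟩ | ⟨hcb, w, hu, hv⟩ | ⟨hcb, w, hu, hv⟩
  · exact .inr (.inl ⟨hac, s, .refl _, hv.symm⟩)
  · exact ((ih.mono (by simp [hv.length_eq])).braid_of_adj hG hac hcb hu).of_eqv_right hv
  · exact ((ih.mono (by simp [hv.length_eq])).braid_of_compl_adj hac hcb hu).of_eqv_right hv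

theorem factorsThroughLcm (hG : G.CliqueFree 3) (ih : FactorsThroughLcmBelow G v.length)
    (h : Eqv G (a :: u) (b :: v)) : FactorsThroughLcm G a u b v := by
  generalize hx : a :: u = x at h
  induction h using Relation.ReflTransGen.head_induction_on generalizing a u with
  | refl =>
    cases hx
    exact .inl ⟨rfl, .refl _⟩
  | head hm _ ihx =>
    subst hx
    cases hm with
    | swap s hac => exact ih.factorsThroughLcm_swap hac (ihx rfl)
    | braid s hac => exact ih.factorsThroughLcm_braid hG hac (ihx rfl)
    | cons c hm => exact (ihx rfl).of_eqv_left (.of_move hm)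

end FactorsThroughLcmBelow

theorem factorsThroughLcmBelow (hG : G.CliqueFree 3) : ∀ ℓ, FactorsThroughLcmBelow G ℓ
  | 0 => fun _ _ _ _ hv => absurd hv (Nat.not_lt_zero _)
  | ℓ + 1 => fun _ _ _ _ hv h =>
    ((factorsThroughLcmBelow hG ℓ).mono (Nat.lt_succ_iff.1 hv)).factorsThroughLcm hG h

theorem factorsThroughLcm_of_eqv (hG : G.CliqueFree 3) (h : Eqv G (a :: u) (b :: v)) :
    FactorsThroughLcm G a u b v :=
  factorsThroughLcmBelow hG _ (Nat.lt_succ_self _) h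

theorem exists_eqv_cons_of_replicate_append_eqv (hG : G.CliqueFree 3) {i j : α}
    (hij : G.Adj i j) {k : ℕ} (hk : 1 ≤ k) (h : Eqv G (List.replicate k i ++ j :: u) (j :: v)) :
    ∃ w, Eqv G u (i :: w) := by
  induction k, hk using Nat.le_induction generalizing v with
  | base =>
    obtain ⟨w, hw, -⟩ := (factorsThroughLcm_of_eqv hG h).exists_of_adj hij
    exact ⟨w, (factorsThroughLcm_of_eqv hG hw).eqv⟩
  | succ k _ ih =>
    obtain ⟨w, hw, -⟩ := (factorsThroughLcm_of_eqv hG h).exists_of_adj hij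
    exact ih hw

end BraidWord

open BraidWord

theorem SimpleGraph.compl_pathGraph_adj {m : ℕ} {i j : Fin m} :
    (pathGraph m)ᶜ.Adj i j ↔ (i : ℕ) + 2 ≤ j ∨ (j : ℕ) + 2 ≤ i := by
  rw [compl_adj, pathGraph_adj, ne_eq, Fin.ext_iff]
  omega

theorem conGen_braidMonoidRels_of_move {m : ℕ} {x y : List (Fin m)}
    (h : Move (pathGraph m) x y) :
    conGen (braidMonoidRels m) (.ofList x) (.ofList y) := by
  induction h with
  | @swap a b s hab =>
    have hrel : conGen (braidMonoidRels m) (.of a * .of b) (.of b * .of a) := by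
      rcases compl_pathGraph_adj.1 hab with hab | hab
      · exact .of _ _ ⟨a, b, .inl ⟨hab, rfl, rfl⟩⟩
      · exact .symm (.of _ _ ⟨b, a, .inl ⟨hab, rfl, rfl⟩⟩)
    simpa [mul_assoc] using (conGen _).mul hrel ((conGen _).refl (.ofList s))
  | @braid a b s hab =>
    have hrel : conGen (braidMonoidRels m) (.of a * .of b * .of a) (.of b * .of a * .of b) := by
      rcases pathGraph_adj.1 hab with hab | hab
      · exact .of _ _ ⟨a, b, .inr ⟨hab.symm, rfl, rfl⟩⟩
      · exact .symm (.of _ _ ⟨b, a, .inr ⟨hab.symm, rfl, rfl⟩⟩)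
    simpa [mul_assoc] using (conGen _).mul hrel ((conGen _).refl (.ofList s))
  | cons c _ ih => exact (conGen _).mul ((conGen _).refl (.of c)) ih

theorem conGen_braidMonoidRels_of_eqv {m : ℕ} {x y : List (Fin m)}
    (h : Eqv (pathGraph m) x y) : conGen (braidMonoidRels m) (.ofList x) (.ofList y) := by
  induction h with
  | refl => exact (conGen _).refl _
  | tail _ hm ih => exact (conGen _).trans ih (conGen_braidMonoidRels_of_move hm)

theorem braidMonoidRels_mk_eq_mk_iff {m : ℕ} {x y : FreeMonoid (Fin m)} :
    PresentedMonoid.mk (braidMonoidRels m) x = PresentedMonoid.mk (braidMonoidRels m) y ↔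
      Eqv (pathGraph m) x.toList y.toList := by
  rw [PresentedMonoid.mk_eq_mk_iff]
  constructor
  · intro h
    induction h with
    | of x y h =>
      obtain ⟨i, j, ⟨hij, rfl, rfl⟩ | ⟨hij, rfl, rfl⟩⟩ := h
      · exact Eqv.swap (compl_pathGraph_adj.2 (.inl hij)) []
      · exact Eqv.braid (pathGraph_adj.2 (.inl hij.symm)) []
    | refl x => exact .refl _
    | symm _ ih => exact ih.symm
    | trans _ _ ih ih' => exact ih.trans ih'
    | mul _ _ ih ih' => exact ih.append ih'
  · exact conGen_braidMonoidRels_of_eqv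

theorem FreeMonoid.toList_of_pow {β : Type*} (b : β) (k : ℕ) :
    (FreeMonoid.of b ^ k).toList = List.replicate k b := by
  induction k with
  | zero => rfl
  | succ k ih => rw [pow_succ, FreeMonoid.toList_mul, ih, List.replicate_succ']; rfl

theorem braidMonoid_left_dvd_of_left_dvd_pow_general (n : ℕ) (i j : Fin (n - 1))
    (hij : (i : ℕ) + 1 = (j : ℕ) ∨ (j : ℕ) + 1 = (i : ℕ)) (k : ℕ) (hk : 1 ≤ k)
    (w : BraidMonoid n)
    (h : ∃ w', braidMonGen n i ^ k * braidMonGen n j * w = braidMonGen n j * w') :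
    ∃ w'', w = braidMonGen n i * w'' := by
  obtain ⟨w', hw⟩ := h
  obtain ⟨W, rfl⟩ := PresentedMonoid.surjective_mk w
  obtain ⟨W', rfl⟩ := PresentedMonoid.surjective_mk w'
  have hmk : PresentedMonoid.mk (braidMonoidRels (n - 1)) (.of i ^ k * .of j * W) =
      PresentedMonoid.mk _ (.of j * W') := by
    rw [map_mul, map_mul, map_pow]
    exact hw
  have hW : Eqv (pathGraph (n - 1)) (List.replicate k i ++ j :: W.toList) (j :: W'.toList) := by
    simpa [FreeMonoid.toList_of_pow] using braidMonoidRels_mk_eq_mk_iff.1 hmk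
  obtain ⟨W'', hW''⟩ := exists_eqv_cons_of_replicate_append_eqv cliqueFree_hasse_three
    (pathGraph_adj.2 hij) hk hW
  exact ⟨PresentedMonoid.mk _ (.ofList W''), braidMonoidRels_mk_eq_mk_iff.2 hW''⟩

/-- In the braid monoid, if `|i - j| = 1`, `k ≥ 1`, and `σⱼ` left-divides `σᵢᵏ σⱼ w`,
then `σᵢ` left-divides `w`. -/
theorem braidMonoid_left_dvd_of_left_dvd_pow (n : ℕ) (hn : 2 ≤ n) (i j : Fin (n - 1))
    (hij : (i : ℕ) + 1 = (j : ℕ) ∨ (j : ℕ) + 1 = (i : ℕ)) (k : ℕ) (hk : 1 ≤ k)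
    (w : BraidMonoid n)
    (h : ∃ w', braidMonGen n i ^ k * braidMonGen n j * w = braidMonGen n j * w') :
    ∃ w'', w = braidMonGen n i * w'' :=
  braidMonoid_left_dvd_of_left_dvd_pow_general n i j hij k hk w h
end
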